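/- arXiv:1911.10527 — 3 statements merged into one kernel-verified Lean document; each statement's English description precedes it below -/
import Mathlib

section
/- Let S be a finite type with |S| = n ≥ 1, let P, Q be row-stochastic matrices on S with |P(s,s') − Q(s,s')| ≤ c·Δ/n for all s, s', and let μ₀, ν₀ be probability mass functions on S. Define μ_t = μ₀ P^t and ν_t = ν₀ Q^t (iterated pushforwards). Then for every t ∈ ℕ, D_TV(μ_t, ν_t) ≤ t·c·Δ/2 + D_TV(μ₀, ν₀). -/
/-- One-step pushforward of a mass function through a kernel. -/
def pushforward {S : Type*} [Fintype S] (μ : S → ℝ) (P : S → S → ℝ) : S → ℝ :=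
  fun s' => ∑ s, μ s * P s s'

/-- Iterated pushforward: μ P^t. -/
def iterPush {S : Type*} [Fintype S] (μ : S → ℝ) (P : S → S → ℝ) : ℕ → S → ℝ
  | 0 => μ
  | t + 1 => pushforward (iterPush μ P t) P

/-! Writing `μP - νQ = (μ - ν)P + ν(P - Q)`, the first term has `ℓ¹` norm at most `‖μ - ν‖₁`
because `P` is stochastic, and the second at most `ε` when every row of `P - Q` has `ℓ¹` norm at
most `ε` and `ν` is a probability vector. Iterating, the `ℓ¹` distance grows by at most `ε` per
step, and the entrywise bound `c Δ / n` gives `ε = c Δ`. -/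

section Pushforward

variable {S : Type*} [Fintype S] {μ ν : S → ℝ} {P Q : S → S → ℝ}

theorem pushforward_nonneg (hμ : ∀ s, 0 ≤ μ s) (hP : ∀ s s', 0 ≤ P s s') (s' : S) :
    0 ≤ pushforward μ P s' :=
  Finset.sum_nonneg fun s _ => mul_nonneg (hμ s) (hP s s')

theorem sum_pushforward (hP : ∀ s, ∑ s', P s s' = 1) :
    ∑ s', pushforward μ P s' = ∑ s, μ s := by
  unfold pushforward
  rw [Finset.sum_comm]
  simp only [← Finset.mul_sum, hP, mul_one]

theorem iterPush_nonneg (hμ : ∀ s, 0 ≤ μ s) (hP : ∀ s s', 0 ≤ P s s') :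
    ∀ t s, 0 ≤ iterPush μ P t s
  | 0 => hμ
  | t + 1 => pushforward_nonneg (iterPush_nonneg hμ hP t) hP

theorem sum_iterPush (hP : ∀ s, ∑ s', P s s' = 1) :
    ∀ t, ∑ s, iterPush μ P t s = ∑ s, μ s
  | 0 => rfl
  | t + 1 => (sum_pushforward hP).trans (sum_iterPush hP t)

theorem abs_pushforward_sub_le (hν : ∀ s, 0 ≤ ν s) (hP : ∀ s s', 0 ≤ P s s') (s' : S) :
    |pushforward μ P s' - pushforward ν Q s'| ≤
      ∑ s, (|μ s - ν s| * P s s' + ν s * |P s s' - Q s s'|) := by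
  have hsplit : pushforward μ P s' - pushforward ν Q s' =
      ∑ s, ((μ s - ν s) * P s s' + ν s * (P s s' - Q s s')) := by
    unfold pushforward
    rw [← Finset.sum_sub_distrib]
    exact Finset.sum_congr rfl fun s _ => by ring
  rw [hsplit]
  refine (Finset.abs_sum_le_sum_abs _ _).trans (Finset.sum_le_sum fun s _ => ?_)
  refine (abs_add_le _ _).trans_eq ?_
  rw [abs_mul, abs_mul, abs_of_nonneg (hP s s'), abs_of_nonneg (hν s)]

theorem sum_abs_pushforward_sub_le {ε : ℝ} (hν : ∀ s, 0 ≤ ν s)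
    (hP0 : ∀ s s', 0 ≤ P s s') (hP1 : ∀ s, ∑ s', P s s' = 1)
    (hPQ : ∀ s, ∑ s', |P s s' - Q s s'| ≤ ε) :
    ∑ s', |pushforward μ P s' - pushforward ν Q s'| ≤
      ∑ s, |μ s - ν s| + (∑ s, ν s) * ε :=
  calc ∑ s', |pushforward μ P s' - pushforward ν Q s'|
      ≤ ∑ s', ∑ s, (|μ s - ν s| * P s s' + ν s * |P s s' - Q s s'|) :=
        Finset.sum_le_sum fun s' _ => abs_pushforward_sub_le hν hP0 s'
    _ = ∑ s, (|μ s - ν s| * ∑ s', P s s' + ν s * ∑ s', |P s s' - Q s s'|) := by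
        rw [Finset.sum_comm]
        simp only [Finset.sum_add_distrib, Finset.mul_sum]
    _ ≤ ∑ s, (|μ s - ν s| + ν s * ε) := by
        gcongr with s
        · rw [hP1, mul_one]
        · exact hν s
        · exact hPQ s
    _ = ∑ s, |μ s - ν s| + (∑ s, ν s) * ε := by
        rw [Finset.sum_add_distrib, Finset.sum_mul]

theorem sum_abs_iterPush_sub_le {ε : ℝ} (hν0 : ∀ s, 0 ≤ ν s) (hν1 : ∑ s, ν s = 1)
    (hP0 : ∀ s s', 0 ≤ P s s') (hP1 : ∀ s, ∑ s', P s s' = 1)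
    (hQ0 : ∀ s s', 0 ≤ Q s s') (hQ1 : ∀ s, ∑ s', Q s s' = 1)
    (hPQ : ∀ s, ∑ s', |P s s' - Q s s'| ≤ ε) :
    ∀ t : ℕ, ∑ s, |iterPush μ P t s - iterPush ν Q t s| ≤ t * ε + ∑ s, |μ s - ν s|
  | 0 => by simp [iterPush]
  | t + 1 => by
    have hstep := sum_abs_pushforward_sub_le (μ := iterPush μ P t)
      (iterPush_nonneg hν0 hQ0 t) hP0 hP1 hPQ
    rw [sum_iterPush hQ1, hν1, one_mul] at hstep
    have ih := sum_abs_iterPush_sub_le hν0 hν1 hP0 hP1 hQ0 hQ1 hPQ t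
    push_cast
    exact hstep.trans (by linarith)

end Pushforward

theorem stmt_7_general {S : Type*} [Fintype S] (n : ℕ) (hcard : Fintype.card S = n) (hn : 1 ≤ n)
    (P Q : S → S → ℝ) (c Δ : ℝ)
    (hP0 : ∀ s s', 0 ≤ P s s') (hP1 : ∀ s, ∑ s', P s s' = 1)
    (hQ0 : ∀ s s', 0 ≤ Q s s') (hQ1 : ∀ s, ∑ s', Q s s' = 1)
    (hPQ : ∀ s s', |P s s' - Q s s'| ≤ c * Δ / n)
    (μ₀ ν₀ : S → ℝ)
    (hν0 : ∀ s, 0 ≤ ν₀ s) (hν1 : ∑ s, ν₀ s = 1) :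
    ∀ t : ℕ,
      (1 / 2) * ∑ s, |iterPush μ₀ P t s - iterPush ν₀ Q t s| ≤
        t * c * Δ / 2 + (1 / 2) * ∑ s, |μ₀ s - ν₀ s| := by
  have hrow : ∀ s, ∑ s', |P s s' - Q s s'| ≤ c * Δ := by
    intro s
    have hn_ne : (n : ℝ) ≠ 0 := by positivity
    calc ∑ s', |P s s' - Q s s'| ≤ Fintype.card S • (c * Δ / n) :=
          Finset.sum_le_card_nsmul _ _ _ fun s' _ => hPQ s s'
      _ = c * Δ := by rw [hcard, nsmul_eq_mul]; field_simp
  intro t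
  have := sum_abs_iterPush_sub_le (μ := μ₀) hν0 hν1 hP0 hP1 hQ0 hQ1 hrow t
  linarith

theorem stmt_7 {S : Type*} [Fintype S] (n : ℕ) (hcard : Fintype.card S = n) (hn : 1 ≤ n)
    (P Q : S → S → ℝ) (c Δ : ℝ) (hc : 0 ≤ c) (hΔ : 0 ≤ Δ)
    (hP0 : ∀ s s', 0 ≤ P s s') (hP1 : ∀ s, ∑ s', P s s' = 1)
    (hQ0 : ∀ s s', 0 ≤ Q s s') (hQ1 : ∀ s, ∑ s', Q s s' = 1)
    (hPQ : ∀ s s', |P s s' - Q s s'| ≤ c * Δ / n)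
    (μ₀ ν₀ : S → ℝ) (hμ0 : ∀ s, 0 ≤ μ₀ s) (hμ1 : ∑ s, μ₀ s = 1)
    (hν0 : ∀ s, 0 ≤ ν₀ s) (hν1 : ∑ s, ν₀ s = 1) :
    ∀ t : ℕ,
      (1 / 2) * ∑ s, |iterPush μ₀ P t s - iterPush ν₀ Q t s| ≤
        t * c * Δ / 2 + (1 / 2) * ∑ s, |μ₀ s - ν₀ s| :=
  stmt_7_general n hcard hn P Q c Δ hP0 hP1 hQ0 hQ1 hPQ μ₀ ν₀ hν0 hν1
end

section
/- Let a, α > 0, 0 < υ < 1, with α·a < 1, and σ₁, σ₂ ≥ 0. Set r = (1 − α·υ·a)²·(1 − α·(1−υ)·a)² and b = α²·a²·((1−υ)²·(1 − α·υ·a)²·σ₁ + υ²·σ₂). If (v_i) satisfies v_{i+1} = r·v_i + b for all i, then 0 ≤ r < 1 and v_i converges to b/(1−r) as i → ∞. -/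
theorem stmt_16 (a α υ σ₁ σ₂ : ℝ) (ha : 0 < a) (hα : 0 < α) (hυ0 : 0 < υ) (hυ1 : υ < 1)
    (hαa : α * a < 1) (hσ₁ : 0 ≤ σ₁) (hσ₂ : 0 ≤ σ₂) (v : ℕ → ℝ)
    (hrec : ∀ i, v (i + 1) =
      (1 - α * υ * a) ^ 2 * (1 - α * (1 - υ) * a) ^ 2 * v i +
        α ^ 2 * a ^ 2 * ((1 - υ) ^ 2 * (1 - α * υ * a) ^ 2 * σ₁ + υ ^ 2 * σ₂)) :
    (0 ≤ (1 - α * υ * a) ^ 2 * (1 - α * (1 - υ) * a) ^ 2 ∧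
      (1 - α * υ * a) ^ 2 * (1 - α * (1 - υ) * a) ^ 2 < 1) ∧
    Filter.Tendsto v Filter.atTop
      (nhds ((α ^ 2 * a ^ 2 * ((1 - υ) ^ 2 * (1 - α * υ * a) ^ 2 * σ₁ + υ ^ 2 * σ₂)) /
        (1 - (1 - α * υ * a) ^ 2 * (1 - α * (1 - υ) * a) ^ 2))) := by
  set r := (1 - α * υ * a) ^ 2 * (1 - α * (1 - υ) * a) ^ 2 with hr
  set b := α ^ 2 * a ^ 2 * ((1 - υ) ^ 2 * (1 - α * υ * a) ^ 2 * σ₁ + υ ^ 2 * σ₂) with hb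
  have h1 : 0 < α * υ * a := by positivity
  have h2 : α * υ * a < 1 := by nlinarith
  have h3 : 0 < α * (1 - υ) * a := by nlinarith
  have h4 : α * (1 - υ) * a < 1 := by nlinarith
  have hr0 : 0 ≤ r := by positivity
  have hr1 : r < 1 := by
    have e1 : (1 - α * υ * a) ^ 2 < 1 := by nlinarith
    have e2 : (1 - α * (1 - υ) * a) ^ 2 < 1 := by nlinarith
    nlinarith [sq_nonneg (1 - α * υ * a), sq_nonneg (1 - α * (1 - υ) * a)]
  refine ⟨⟨hr0, hr1⟩, ?_⟩
  set L := b / (1 - r) with hL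
  have hrne : 1 - r ≠ 0 := by linarith
  have hLkey : r * L + b = L := by
    rw [hL]
    field_simp
    ring
  have hform : ∀ i, v i = r ^ i * (v 0 - L) + L := by
    intro i
    induction i with
    | zero => simp
    | succ n ih =>
      rw [hrec n, ih, pow_succ]
      nlinarith [hLkey]
  have : Filter.Tendsto (fun i => r ^ i * (v 0 - L) + L) Filter.atTop (nhds (0 * (v 0 - L) + L)) := by
    exact ((tendsto_pow_atTop_nhds_zero_of_lt_one hr0 hr1).mul_const _).add_const _
  simp only [zero_mul, zero_add] at this
  exact this.congr (fun i => (hform i).symm)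
end

section
/- Let S be a finite type, 0 ≤ γ < 1, and for each t ∈ ℕ let ρ_t, σ_t : S → ℝ be probability mass functions with D_TV(ρ_t, σ_t) ≤ t·c·Δ/2 + D₀ for constants c, Δ, D₀ ≥ 0. Let g : ℕ → S → ℝ satisfy |g_t(s)| ≤ ψ for all t, s. Then |∑_{t=0}^∞ γ^t (∑_s (ρ_t(s) − σ_t(s)) g_t(s))| ≤ γ·c·ψ·Δ/(1−γ)² + 2ψ·D₀/(1−γ). -/
open Finset

theorem abs_sum_mul_le_sum_abs_mul {ι : Type*} (s : Finset ι) (x f : ι → ℝ) {ψ : ℝ}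
    (hf : ∀ i ∈ s, |f i| ≤ ψ) :
    |∑ i ∈ s, x i * f i| ≤ (∑ i ∈ s, |x i|) * ψ :=
  calc |∑ i ∈ s, x i * f i| ≤ ∑ i ∈ s, |x i * f i| := abs_sum_le_sum_abs _ _
    _ ≤ ∑ i ∈ s, |x i| * ψ := sum_le_sum fun i hi ↦ by
        rw [abs_mul]; exact mul_le_mul_of_nonneg_left (hf i hi) (abs_nonneg _)
    _ = (∑ i ∈ s, |x i|) * ψ := (sum_mul _ _ _).symm

theorem abs_tsum_geometric_mul_le_of_abs_le_linear {γ A B : ℝ} (hγ0 : 0 ≤ γ) (hγ1 : γ < 1)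
    (a : ℕ → ℝ) (ha : ∀ t : ℕ, |a t| ≤ A * t + B) :
    |∑' t : ℕ, γ ^ t * a t| ≤ A * γ / (1 - γ) ^ 2 + B / (1 - γ) := by
  have hγ : ‖γ‖ < 1 := by rwa [Real.norm_of_nonneg hγ0]
  have hlin : Summable fun t : ℕ ↦ (t : ℝ) * γ ^ t := by
    simpa using summable_pow_mul_geometric_of_norm_lt_one 1 hγ
  have hgeom : Summable fun t : ℕ ↦ γ ^ t := summable_geometric_of_norm_lt_one hγ
  set b : ℕ → ℝ := fun t ↦ A * ((t : ℝ) * γ ^ t) + B * γ ^ t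
  have hb : Summable b := (hlin.mul_left A).add (hgeom.mul_left B)
  have hab : ∀ t, ‖γ ^ t * a t‖ ≤ b t := fun t ↦ by
    rw [Real.norm_eq_abs, abs_mul, abs_of_nonneg (pow_nonneg hγ0 t)]
    calc γ ^ t * |a t| ≤ γ ^ t * (A * t + B) := mul_le_mul_of_nonneg_left (ha t) (pow_nonneg hγ0 t)
      _ = b t := by ring
  have hsum_b : ∑' t, b t = A * γ / (1 - γ) ^ 2 + B / (1 - γ) := by
    rw [(hlin.mul_left A).tsum_add (hgeom.mul_left B), tsum_mul_left, tsum_mul_left,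
      tsum_coe_mul_geometric_of_norm_lt_one hγ, tsum_geometric_of_lt_one hγ0 hγ1]
    ring
  rw [← Real.norm_eq_abs, ← hsum_b]
  exact tsum_of_norm_bounded hb.hasSum hab

theorem stmt_17_general {S : Type*} [Fintype S] (γ c Δ D₀ ψ : ℝ)
    (hγ0 : 0 ≤ γ) (hγ1 : γ < 1)
    (ρ σ : ℕ → S → ℝ) (g : ℕ → S → ℝ)
    (hρ1 : ∀ t, ∑ s, ρ t s = 1)
    (hTV : ∀ t : ℕ, (1 / 2) * ∑ s, |ρ t s - σ t s| ≤ t * c * Δ / 2 + D₀)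
    (hg : ∀ t s, |g t s| ≤ ψ) :
    |∑' t : ℕ, γ ^ t * ∑ s, (ρ t s - σ t s) * g t s| ≤
      γ * c * ψ * Δ / (1 - γ) ^ 2 + 2 * ψ * D₀ / (1 - γ) := by
  obtain ⟨s₀⟩ : Nonempty S := by
    by_contra hS
    simpa [not_nonempty_iff.mp hS] using hρ1 0
  have hψ : 0 ≤ ψ := (abs_nonneg _).trans (hg 0 s₀)
  have hstep : ∀ t : ℕ, |∑ s, (ρ t s - σ t s) * g t s| ≤ c * ψ * Δ * t + 2 * ψ * D₀ := fun t ↦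
    calc |∑ s, (ρ t s - σ t s) * g t s| ≤ (∑ s, |ρ t s - σ t s|) * ψ :=
          abs_sum_mul_le_sum_abs_mul _ _ _ fun s _ ↦ hg t s
      _ ≤ (t * c * Δ + 2 * D₀) * ψ := mul_le_mul_of_nonneg_right (by linarith [hTV t]) hψ
      _ = c * ψ * Δ * t + 2 * ψ * D₀ := by ring
  convert abs_tsum_geometric_mul_le_of_abs_le_linear hγ0 hγ1 _ hstep using 2
  ring

theorem stmt_17 {S : Type*} [Fintype S] (γ c Δ D₀ ψ : ℝ)
    (hγ0 : 0 ≤ γ) (hγ1 : γ < 1) (hc : 0 ≤ c) (hΔ : 0 ≤ Δ) (hD₀ : 0 ≤ D₀)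
    (ρ σ : ℕ → S → ℝ) (g : ℕ → S → ℝ)
    (hρ0 : ∀ t s, 0 ≤ ρ t s) (hρ1 : ∀ t, ∑ s, ρ t s = 1)
    (hσ0 : ∀ t s, 0 ≤ σ t s) (hσ1 : ∀ t, ∑ s, σ t s = 1)
    (hTV : ∀ t : ℕ, (1 / 2) * ∑ s, |ρ t s - σ t s| ≤ t * c * Δ / 2 + D₀)
    (hg : ∀ t s, |g t s| ≤ ψ) :
    |∑' t : ℕ, γ ^ t * ∑ s, (ρ t s - σ t s) * g t s| ≤
      γ * c * ψ * Δ / (1 - γ) ^ 2 + 2 * ψ * D₀ / (1 - γ) :=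
  stmt_17_general γ c Δ D₀ ψ hγ0 hγ1 ρ σ g hρ1 hTV hg
end
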